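/- For every real q with 0<q<1, every integer n≥0 and every linear functional u on ℂ[x], one has α·𝐃_q^n 𝐒_q u = α_{n+1}·𝐒_q 𝐃_q^n u + γ_n·U₁·𝐃_q^{n+1} u, as linear functionals on ℂ[x] (𝐃_q^n denoting the n-fold iterate of 𝐃_q). -/

import Mathlib

open Polynomial

noncomputable section AW

/-- The map `x(z) = (z + z⁻¹)/2`. -/
def awXmap (z : ℂ) : ℂ := (z + z⁻¹) / 2

/-- The positive square root `q^{1/2}` of `q`, as a complex number. -/
def awSqrt (q : ℝ) : ℂ := (Real.sqrt q : ℂ)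

/-- `D` satisfies the defining (pointwise) property of the Askey–Wilson operator `𝒟_q`. -/
def IsAWDiff (q : ℝ) (D : ℂ[X] → ℂ[X]) : Prop :=
  ∀ f : ℂ[X], ∀ z : ℂ, z ≠ 0 → z ≠ 1 → z ≠ -1 →
    (D f).eval (awXmap z) =
      (f.eval (awXmap (awSqrt q * z)) - f.eval (awXmap ((awSqrt q)⁻¹ * z))) /
        (awXmap (awSqrt q * z) - awXmap ((awSqrt q)⁻¹ * z))

/-- `S` satisfies the defining (pointwise) property of the averaging operator `𝒮_q`. -/
def IsAWAvg (q : ℝ) (S : ℂ[X] → ℂ[X]) : Prop :=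
  ∀ f : ℂ[X], ∀ z : ℂ, z ≠ 0 → z ≠ 1 → z ≠ -1 →
    (S f).eval (awXmap z) =
      (f.eval (awXmap (awSqrt q * z)) + f.eval (awXmap ((awSqrt q)⁻¹ * z))) / 2

/-- `α = (q^{1/2} + q^{-1/2})/2`. -/
def awAlpha (q : ℝ) : ℂ := (awSqrt q + (awSqrt q)⁻¹) / 2

/-- `α_n = (q^{n/2} + q^{-n/2})/2`. -/
def awAlphaN (q : ℝ) (n : ℕ) : ℂ := ((awSqrt q) ^ n + (awSqrt q)⁻¹ ^ n) / 2

/-- `γ_n = (q^{n/2} - q^{-n/2})/(q^{1/2} - q^{-1/2})`. -/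
def awGammaN (q : ℝ) (n : ℕ) : ℂ :=
  ((awSqrt q) ^ n - (awSqrt q)⁻¹ ^ n) / (awSqrt q - (awSqrt q)⁻¹)

/-- `α_n` for integer `n` (this satisfies the conventions `α_{-1} = α`). -/
def awAlphaZ (q : ℝ) (n : ℤ) : ℂ := ((awSqrt q) ^ n + (awSqrt q) ^ (-n)) / 2

/-- `γ_n` for integer `n` (this satisfies the conventions `γ_{-1} = -1`). -/
def awGammaZ (q : ℝ) (n : ℤ) : ℂ :=
  ((awSqrt q) ^ n - (awSqrt q) ^ (-n)) / (awSqrt q - (awSqrt q)⁻¹)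

/-- `γ_n! = γ_1 ⋯ γ_n` (with `γ_0! = 1`). -/
def awGammaFact (q : ℝ) (n : ℕ) : ℂ := ∏ j ∈ Finset.range n, awGammaN q (j + 1)

/-- The polynomial `U₁(x) = (α² - 1)·x`. -/
def awU1 (q : ℝ) : ℂ[X] := C ((awAlpha q) ^ 2 - 1) * X

/-- The polynomial `U₂(x) = (α² - 1)·(x² - 1)`. -/
def awU2 (q : ℝ) : ℂ[X] := C ((awAlpha q) ^ 2 - 1) * (X ^ 2 - 1)

/-- The action `𝐃_q` on linear functionals: `⟨𝐃_q u, f⟩ = -⟨u, 𝒟_q f⟩`. -/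
def awDdual (D : ℂ[X] → ℂ[X]) (v : ℂ[X] → ℂ) : ℂ[X] → ℂ := fun f => -(v (D f))

/-- The action `𝐒_q` on linear functionals: `⟨𝐒_q u, f⟩ = ⟨u, 𝒮_q f⟩`. -/
def awSdual (S : ℂ[X] → ℂ[X]) (v : ℂ[X] → ℂ) : ℂ[X] → ℂ := fun f => v (S f)

end AW

noncomputable section AWProof

open Polynomial

variable (q : ℝ)

/-- The sequence of points `x_m = x(s^m z)`. -/
def awXp (s z : ℂ) (m : ℤ) : ℂ := awXmap (s ^ m * z)

/-- The discrete difference operator. -/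
def awdd (s z : ℂ) (F : ℤ → ℂ) (k : ℤ) : ℂ :=
  (F (k+1) - F (k-1)) / (awXp s z (k+1) - awXp s z (k-1))

/-- The discrete averaging operator. -/
def awss (F : ℤ → ℂ) (k : ℤ) : ℂ := (F (k+1) + F (k-1)) / 2

lemma awSqrt_ne_zero (hq0 : 0 < q) : awSqrt q ≠ 0 := by
  simp [awSqrt, Complex.ofReal_ne_zero, Real.sqrt_ne_zero', hq0]

lemma awSqrt_sq (hq0 : 0 < q) : awSqrt q ^ 2 = (q : ℂ) := by
  rw [awSqrt, ← Complex.ofReal_pow, sq, Real.mul_self_sqrt hq0.le]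

lemma awSub_ne_zero (hq0 : 0 < q) (hq1 : q < 1) : awSqrt q - (awSqrt q)⁻¹ ≠ 0 := by
  have hs := awSqrt_ne_zero q hq0
  intro h
  have h2 : awSqrt q ^ 2 = 1 := by
    have := sub_eq_zero.mp h
    field_simp at this
    exact this
  rw [awSqrt_sq q hq0] at h2
  have : (q : ℂ) = ((1 : ℝ) : ℂ) := by simpa using h2
  have : q = 1 := by exact_mod_cast this
  linarith

lemma awAlpha_ne_zero (hq0 : 0 < q) : awAlpha q ≠ 0 := by
  have hs := awSqrt_ne_zero q hq0
  rw [awAlpha]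
  intro h
  have h2 : awSqrt q ^ 2 + 1 = 0 := by
    field_simp at h
    rw [sq]
    linear_combination h
  rw [awSqrt_sq q hq0] at h2
  have : ((q + 1 : ℝ) : ℂ) = 0 := by push_cast; linear_combination h2
  have : q + 1 = 0 := by exact_mod_cast this
  linarith

end AWProof
noncomputable section AWProof2

open Polynomial

lemma awXp_eq (s z : ℂ) (m : ℤ) :
    awXp s z m = (s ^ m * z + s ^ (-m) * z⁻¹) / 2 := by
  rw [awXp, awXmap, mul_inv, zpow_neg]

lemma awrel2 (s z : ℂ) (hs : s ≠ 0) (k : ℤ) :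
    awXp s z (k+1) + awXp s z (k-1) = (s + s⁻¹) * awXp s z k := by
  simp only [awXp_eq, neg_add, neg_sub, sub_eq_add_neg, neg_neg, zpow_add₀ hs, zpow_one, zpow_neg_one]
  ring

lemma awrel1 (s z : ℂ) (hs : s ≠ 0) (k : ℤ) :
    awXp s z (k+2) - awXp s z k =
      ((s + s⁻¹)/2) * (awXp s z (k+1) - awXp s z (k-1))
        + 2 * (((s + s⁻¹)/2)^2 - 1) * awXp s z k := by
  simp only [awXp_eq, neg_add, neg_sub, sub_eq_add_neg, neg_neg, zpow_add₀ hs, zpow_one, zpow_neg_one,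
    show ((2:ℤ) = 1 + 1) by norm_num]
  linear_combination (-((s ^ k * z + s ^ (-k) * z⁻¹)/2)) * (mul_inv_cancel₀ hs)

lemma awdd_lin (s z : ℂ) (a b : ℂ) (F G : ℤ → ℂ) (k : ℤ) :
    awdd s z (fun m => a * F m + b * G m) k = a * awdd s z F k + b * awdd s z G k := by
  simp only [awdd, mul_div_assoc']
  rw [← add_div]
  congr 1
  ring

lemma awdd_iter_lin (s z : ℂ) (a b : ℂ) (F G : ℤ → ℂ) (n : ℕ) (k : ℤ) :
    (awdd s z)^[n] (fun m => a * F m + b * G m) k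
      = a * (awdd s z)^[n] F k + b * (awdd s z)^[n] G k := by
  induction n generalizing F G k with
  | zero => simp
  | succ n ih =>
    rw [Function.iterate_succ_apply, Function.iterate_succ_apply,
      Function.iterate_succ_apply]
    have : awdd s z (fun m => a * F m + b * G m) = fun m => a * awdd s z F m + b * awdd s z G m :=
      funext fun m => awdd_lin s z a b F G m
    rw [this]
    exact ih _ _ _

end AWProof2
noncomputable section AWProof3

lemma awidx1 (k : ℤ) : k + 1 + 1 = k + 2 := by ring
lemma awidx2 (k : ℤ) : k + 1 - 1 = k := by ring
lemma awidx3 (k : ℤ) : k - 1 + 1 = k := by ring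
lemma awidx4 (k : ℤ) : k - 1 - 1 = k - 2 := by ring

/-- Relation (a): `α 𝒮𝒟 F = 𝒟𝒮 F - (α²-1) x_k 𝒟² F` at the sequence level. -/
lemma awseqA (s z : ℂ) (hs : s ≠ 0)
    (hδ : ∀ k : ℤ, awXp s z (k+1) - awXp s z (k-1) ≠ 0) (F : ℤ → ℂ) (k : ℤ) :
    ((s+s⁻¹)/2) * awss (awdd s z F) k
      = awdd s z (awss F) k
        - (((s+s⁻¹)/2)^2 - 1) * awXp s z k * awdd s z (awdd s z F) k := by
  have hA : awXp s z (k+1) - awXp s z (k-1) ≠ 0 := hδ k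
  have hB : awXp s z (k+2) - awXp s z k ≠ 0 := by
    have := hδ (k+1); rwa [awidx1, awidx2] at this
  have hC : awXp s z k - awXp s z (k-2) ≠ 0 := by
    have := hδ (k-1); rwa [awidx3, awidx4] at this
  set a := (s+s⁻¹)/2 with ha
  set x := awXp s z k with hx
  set A := awXp s z (k+1) - awXp s z (k-1) with hAdef
  set B := awXp s z (k+2) - awXp s z k with hBdef
  set C := awXp s z k - awXp s z (k-2) with hCdef
  have hBrel : B = a * A + 2*(a^2-1)*x := by
    rw [hBdef, hAdef, hx, ha]; exact awrel1 s z hs k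
  have hCrel : C = a * A - 2*(a^2-1)*x := by
    have h1 := awrel2 s z hs (k+1)
    have h2 := awrel2 s z hs (k-1)
    rw [awidx1, awidx2] at h1
    rw [awidx3, awidx4] at h2
    rw [hCdef, hAdef, hx, ha]
    linear_combination h1 - h2 - awrel1 s z hs k
  simp only [awdd, awss, awidx1, awidx2, awidx3, awidx4]
  rw [← hAdef, ← hBdef, ← hCdef]
  set p := (F (k+2) - F k)/B with hp
  set r := (F k - F (k-2))/C with hr
  have hpB : F (k+2) - F k = p * B := by rw [hp, div_mul_cancel₀ _ hB]
  have hrC : F k - F (k-2) = r * C := by rw [hr, div_mul_cancel₀ _ hC]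
  have hF : (F (k+2) + F k)/2 - (F k + F (k-2))/2 = (p*B + r*C)/2 := by
    linear_combination (1/2 : ℂ) * hpB + (1/2 : ℂ) * hrC
  rw [hF, hBrel, hCrel]
  field_simp
  ring

/-- Relation (c): `α (α²-1) x_k 𝒟F = 𝒟(UF) - (α²-1) 𝒮F` at the sequence level. -/
lemma awseqC (s z : ℂ) (hs : s ≠ 0)
    (hδ : ∀ k : ℤ, awXp s z (k+1) - awXp s z (k-1) ≠ 0) (F : ℤ → ℂ) (k : ℤ) :
    ((s+s⁻¹)/2) * ((((s+s⁻¹)/2)^2 - 1) * awXp s z k * awdd s z F k)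
      = awdd s z (fun m => (((s+s⁻¹)/2)^2 - 1) * awXp s z m * F m) k
        - (((s+s⁻¹)/2)^2 - 1) * awss F k := by
  have hA : awXp s z (k+1) - awXp s z (k-1) ≠ 0 := hδ k
  set a := (s+s⁻¹)/2 with ha
  simp only [awdd, awss]
  set x := awXp s z k with hx
  set A := awXp s z (k+1) - awXp s z (k-1) with hAdef
  have hXp : awXp s z (k+1) = a * x + A / 2 := by
    rw [hAdef, hx, ha]; linear_combination (1/2 : ℂ) * awrel2 s z hs k
  have hXm : awXp s z (k-1) = a * x - A / 2 := by
    rw [hAdef, hx, ha]; linear_combination (1/2 : ℂ) * awrel2 s z hs k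
  rw [hXp, hXm]
  field_simp
  ring

/-- Relation (d): `(α²-1) x_k 𝒟²F = 𝒟²(UF) - 2(α²-1) 𝒟𝒮F` at the sequence level. -/
lemma awseqD (s z : ℂ) (hs : s ≠ 0)
    (hδ : ∀ k : ℤ, awXp s z (k+1) - awXp s z (k-1) ≠ 0) (F : ℤ → ℂ) (k : ℤ) :
    (((s+s⁻¹)/2)^2 - 1) * awXp s z k * awdd s z (awdd s z F) k
      = awdd s z (awdd s z (fun m => (((s+s⁻¹)/2)^2 - 1) * awXp s z m * F m)) k
        - 2 * (((s+s⁻¹)/2)^2 - 1) * awdd s z (awss F) k := by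
  have hA : awXp s z (k+1) - awXp s z (k-1) ≠ 0 := hδ k
  have hB : awXp s z (k+2) - awXp s z k ≠ 0 := by
    have := hδ (k+1); rwa [awidx1, awidx2] at this
  have hC : awXp s z k - awXp s z (k-2) ≠ 0 := by
    have := hδ (k-1); rwa [awidx3, awidx4] at this
  set a := (s+s⁻¹)/2 with ha
  simp only [awdd, awss, awidx1, awidx2, awidx3, awidx4]
  set x := awXp s z k with hx
  set A := awXp s z (k+1) - awXp s z (k-1) with hAdef
  set B := awXp s z (k+2) - awXp s z k with hBdef
  set C := awXp s z k - awXp s z (k-2) with hCdef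
  have hX2 : awXp s z (k+2) = x + B := by rw [hBdef]; ring
  have hXm2 : awXp s z (k-2) = x - C := by rw [hCdef]; ring
  set p := (F (k+2) - F k)/B with hp
  set r := (F k - F (k-2))/C with hr
  have h1 : ((a^2-1) * awXp s z (k+2) * F (k+2) - (a^2-1) * x * F k)/B
      = (a^2-1) * (x * p + F (k+2)) := by
    rw [hX2, hp]; field_simp; ring
  have h2 : ((a^2-1) * x * F k - (a^2-1) * awXp s z (k-2) * F (k-2))/C
      = (a^2-1) * (x * r + F (k-2)) := by
    rw [hXm2, hr]; field_simp; ring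
  rw [h1, h2]
  field_simp
  ring

end AWProof3
noncomputable section AWProof4

lemma awS1 (q : ℝ) (hq0 : 0 < q) (hq1 : q < 1) (n : ℕ) :
    awAlpha q * awGammaN q (n+1) = awAlphaN q (n+1) + awGammaN q n := by
  have hs := awSqrt_ne_zero q hq0
  have hd := awSub_ne_zero q hq0 hq1
  set s := awSqrt q with hsdef
  have hγ1 : awGammaN q (n+1) * (s - s⁻¹) = s^(n+1) - s⁻¹^(n+1) :=
    div_mul_cancel₀ _ hd
  have hγ0 : awGammaN q n * (s - s⁻¹) = s^n - s⁻¹^n :=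
    div_mul_cancel₀ _ hd
  apply mul_right_cancel₀ hd
  rw [awAlpha, awAlphaN, ← hsdef]
  linear_combination ((s+s⁻¹)/2) * hγ1 - hγ0 + (s^n - s⁻¹^n) * mul_inv_cancel₀ hs

lemma awS2 (q : ℝ) (hq0 : 0 < q) (hq1 : q < 1) (n : ℕ) :
    awAlpha q * awAlphaN q (n+2) =
      awAlphaN q (n+1) * (1 + 2*((awAlpha q)^2 - 1)) + awGammaN q n * ((awAlpha q)^2 - 1) := by
  have hs := awSqrt_ne_zero q hq0
  have hd := awSub_ne_zero q hq0 hq1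
  set s := awSqrt q with hsdef
  have hγ0 : awGammaN q n * (s - s⁻¹) = s^n - s⁻¹^n :=
    div_mul_cancel₀ _ hd
  apply mul_right_cancel₀ hd
  rw [awAlpha, awAlphaN, awAlphaN, ← hsdef]
  linear_combination (-(((s+s⁻¹)/2)^2 - 1)) * hγ0
    + (-(((s^n + s⁻¹^n)*(s^2 - s⁻¹^2) + 4*(s^n - s⁻¹^n))/4)) * mul_inv_cancel₀ hs

lemma awA1 (q : ℝ) : awAlphaN q 1 = awAlpha q := by
  simp [awAlphaN, awAlpha, pow_one]

lemma awG0 (q : ℝ) : awGammaN q 0 = 0 := by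
  simp [awGammaN]

end AWProof4
noncomputable section AWProof5

lemma awClaim (q : ℝ) (hq0 : 0 < q) (hq1 : q < 1) (z : ℂ)
    (hδ : ∀ k : ℤ, awXp (awSqrt q) z (k+1) - awXp (awSqrt q) z (k-1) ≠ 0) :
    ∀ (n : ℕ) (F : ℤ → ℂ) (k : ℤ),
      awAlpha q * awss ((awdd (awSqrt q) z)^[n] F) k
        = awAlphaN q (n+1) * (awdd (awSqrt q) z)^[n] (awss F) k
          - awGammaN q n * (awdd (awSqrt q) z)^[n+1]
              (fun m => ((awAlpha q)^2 - 1) * awXp (awSqrt q) z m * F m) k := by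
  have hs := awSqrt_ne_zero q hq0
  have hα := awAlpha_ne_zero q hq0
  set s := awSqrt q with hsdef
  set dd := awdd s z with hdd
  set α := awAlpha q with hαdef
  set c := α^2 - 1 with hcdef
  have hαs : α = (s + s⁻¹)/2 := rfl
  intro n
  induction n with
  | zero =>
    intro F k
    simp [awA1, awG0]
    exact Or.inl rfl
  | succ n ih =>
    intro F k
    rw [Function.iterate_succ_apply dd n F]
    rw [ih (dd F) k]
    -- rewrite 𝒮𝒟F via relation (a)
    have funA : awss (dd F) = fun m => α⁻¹ * dd (awss F) m
        + (-α⁻¹) * ((fun m' => c * awXp s z m' * dd (dd F) m') m) := by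
      funext m
      have h := awseqA s z hs hδ F m
      rw [← hαs, ← hcdef] at h
      field_simp
      linear_combination h
    have funD : (fun m' => c * awXp s z m' * dd (dd F) m')
        = fun m => (1:ℂ) * dd (dd (fun m' => c * awXp s z m' * F m')) m
            + (-(2*c)) * dd (awss F) m := by
      funext m
      have h := awseqD s z hs hδ F m
      rw [← hαs, ← hcdef] at h
      rw [h]; ring
    have funC : (fun m => c * awXp s z m * dd F m)
        = fun m => α⁻¹ * dd (fun m' => c * awXp s z m' * F m') m
            + (-(α⁻¹ * c)) * awss F m := by
      funext m
      have h := awseqC s z hs hδ F m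
      rw [← hαs, ← hcdef] at h
      field_simp
      linear_combination h
    rw [funA]
    rw [awdd_iter_lin s z _ _ _ _ n k]
    rw [funD]
    rw [awdd_iter_lin s z _ _ _ _ n k]
    rw [funC]
    rw [awdd_iter_lin s z _ _ _ _ (n+1) k]
    have cv : ∀ (G : ℤ → ℂ) (m : ℕ), (awdd s z)^[m] (dd G) k = dd^[m+1] G k :=
      fun G m => by rw [Function.iterate_succ_apply]
    rw [cv (awss F) n, cv (dd (fun m' => c * awXp s z m' * F m')) n,
      cv (fun m' => c * awXp s z m' * F m') (n+1)]
    have hS1 := awS1 q hq0 hq1 n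
    have hS2 := awS2 q hq0 hq1 n
    rw [← hαdef] at hS1
    rw [← hαdef] at hS2
    rw [← hcdef] at hS2
    rw [show n+2 = n+1+1 from rfl] at hS2
    have hinv : α * α⁻¹ = 1 := mul_inv_cancel₀ hα
    set P := dd^[n+1] (awss F) k with hP
    set Q := dd^[n+1+1] (fun m' => c * awXp s z m' * F m') k with hQ
    linear_combination (-(α⁻¹ * P)) * hS2 + (α⁻¹ * Q) * hS1
      + (awAlphaN q (n+1+1) * P - awGammaN q (n+1) * Q) * hinv

end AWProof5
noncomputable section AWProof6

open Polynomial

lemma awbridgeD (q : ℝ) (hq0 : 0 < q) (z : ℂ)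
    (h0 : ∀ k : ℤ, awSqrt q ^ k * z ≠ 0)
    (h1 : ∀ k : ℤ, awSqrt q ^ k * z ≠ 1)
    (hm1 : ∀ k : ℤ, awSqrt q ^ k * z ≠ -1)
    (D : ℂ[X] → ℂ[X]) (hD : IsAWDiff q D) (g : ℂ[X]) (k : ℤ) :
    (D g).eval (awXp (awSqrt q) z k) = awdd (awSqrt q) z (fun m => g.eval (awXp (awSqrt q) z m)) k := by
  have hs := awSqrt_ne_zero q hq0
  have h := hD g (awSqrt q ^ k * z) (h0 k) (h1 k) (hm1 k)
  have e1 : awSqrt q * (awSqrt q ^ k * z) = awSqrt q ^ (k+1) * z := by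
    rw [zpow_add₀ hs, zpow_one]; ring
  have e2 : (awSqrt q)⁻¹ * (awSqrt q ^ k * z) = awSqrt q ^ (k-1) * z := by
    rw [zpow_sub₀ hs, zpow_one]; field_simp
  rw [e1, e2] at h
  exact h

lemma awbridgeS (q : ℝ) (hq0 : 0 < q) (z : ℂ)
    (h0 : ∀ k : ℤ, awSqrt q ^ k * z ≠ 0)
    (h1 : ∀ k : ℤ, awSqrt q ^ k * z ≠ 1)
    (hm1 : ∀ k : ℤ, awSqrt q ^ k * z ≠ -1)
    (S : ℂ[X] → ℂ[X]) (hS : IsAWAvg q S) (g : ℂ[X]) (k : ℤ) :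
    (S g).eval (awXp (awSqrt q) z k) = awss (fun m => g.eval (awXp (awSqrt q) z m)) k := by
  have hs := awSqrt_ne_zero q hq0
  have h := hS g (awSqrt q ^ k * z) (h0 k) (h1 k) (hm1 k)
  have e1 : awSqrt q * (awSqrt q ^ k * z) = awSqrt q ^ (k+1) * z := by
    rw [zpow_add₀ hs, zpow_one]; ring
  have e2 : (awSqrt q)⁻¹ * (awSqrt q ^ k * z) = awSqrt q ^ (k-1) * z := by
    rw [zpow_sub₀ hs, zpow_one]; field_simp
  rw [e1, e2] at h
  exact h

lemma awbridgeDn (q : ℝ) (hq0 : 0 < q) (z : ℂ)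
    (h0 : ∀ k : ℤ, awSqrt q ^ k * z ≠ 0)
    (h1 : ∀ k : ℤ, awSqrt q ^ k * z ≠ 1)
    (hm1 : ∀ k : ℤ, awSqrt q ^ k * z ≠ -1)
    (D : ℂ[X] → ℂ[X]) (hD : IsAWDiff q D) :
    ∀ (n : ℕ) (g : ℂ[X]) (k : ℤ),
      (D^[n] g).eval (awXp (awSqrt q) z k)
        = (awdd (awSqrt q) z)^[n] (fun m => g.eval (awXp (awSqrt q) z m)) k := by
  intro n
  induction n with
  | zero => intro g k; simp
  | succ n ih =>
    intro g k
    rw [Function.iterate_succ_apply D n g, ih (D g) k]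
    have : (fun m => (D g).eval (awXp (awSqrt q) z m))
        = awdd (awSqrt q) z (fun m => g.eval (awXp (awSqrt q) z m)) :=
      funext fun m => awbridgeD q hq0 z h0 h1 hm1 D hD g m
    rw [this, ← Function.iterate_succ_apply]

end AWProof6
noncomputable section AWProof7

open Polynomial

lemma awpt (q : ℝ) (hq0 : 0 < q) (hq1 : q < 1) (t : ℝ) (ht : 1 < t) (k : ℤ) :
    awSqrt q ^ k * ((t:ℂ) * Complex.I) = ((Real.sqrt q ^ k * t : ℝ) : ℂ) * Complex.I := by
  rw [awSqrt]
  push_cast [Complex.ofReal_zpow]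
  ring

lemma awpt0 (q : ℝ) (hq0 : 0 < q) (hq1 : q < 1) (t : ℝ) (ht : 1 < t) (k : ℤ) :
    awSqrt q ^ k * ((t:ℂ) * Complex.I) ≠ 0 := by
  have hs := awSqrt_ne_zero q hq0
  apply mul_ne_zero (zpow_ne_zero k hs)
  apply mul_ne_zero _ Complex.I_ne_zero
  exact_mod_cast (by linarith : t ≠ 0)

lemma awrpos (q : ℝ) (hq0 : 0 < q) (t : ℝ) (ht : 1 < t) (k : ℤ) :
    0 < Real.sqrt q ^ k * t := by
  have : (0:ℝ) < Real.sqrt q := Real.sqrt_pos.mpr hq0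
  positivity

lemma awpt1 (q : ℝ) (hq0 : 0 < q) (hq1 : q < 1) (t : ℝ) (ht : 1 < t) (k : ℤ) :
    awSqrt q ^ k * ((t:ℂ) * Complex.I) ≠ 1 := by
  rw [awpt q hq0 hq1 t ht k]
  intro h
  have him : ((Real.sqrt q ^ k * t : ℝ):ℂ).re = Complex.im 1 := by
    rw [← Complex.mul_I_im, h]
  simp only [Complex.ofReal_re, Complex.one_im] at him
  have := awrpos q hq0 t ht k
  linarith

lemma awptm1 (q : ℝ) (hq0 : 0 < q) (hq1 : q < 1) (t : ℝ) (ht : 1 < t) (k : ℤ) :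
    awSqrt q ^ k * ((t:ℂ) * Complex.I) ≠ -1 := by
  rw [awpt q hq0 hq1 t ht k]
  intro h
  have him : ((Real.sqrt q ^ k * t : ℝ):ℂ).re = Complex.im (-1) := by
    rw [← Complex.mul_I_im, h]
  simp only [Complex.ofReal_re, Complex.neg_im, Complex.one_im, neg_zero] at him
  have := awrpos q hq0 t ht k
  linarith

lemma awptδ (q : ℝ) (hq0 : 0 < q) (hq1 : q < 1) (t : ℝ) (ht : 1 < t) (k : ℤ) :
    awXp (awSqrt q) ((t:ℂ) * Complex.I) (k+1) - awXp (awSqrt q) ((t:ℂ) * Complex.I) (k-1) ≠ 0 := by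
  have hs := awSqrt_ne_zero q hq0
  have hd := awSub_ne_zero q hq0 hq1
  have hz : (t:ℂ) * Complex.I ≠ 0 := by
    apply mul_ne_zero _ Complex.I_ne_zero
    exact_mod_cast (by linarith : t ≠ 0)
  set s := awSqrt q with hsdef
  set z := (t:ℂ) * Complex.I with hzdef
  have hfact : awXp s z (k+1) - awXp s z (k-1)
      = (s - s⁻¹) * (s ^ k * z - s ^ (-k) * z⁻¹) / 2 := by
    simp only [awXp_eq, neg_add, neg_sub, sub_eq_add_neg, neg_neg, zpow_add₀ hs, zpow_one,
      zpow_neg_one]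
    ring
  rw [hfact]
  apply div_ne_zero _ two_ne_zero
  apply mul_ne_zero hd
  intro h
  have hsq : (s ^ k * z) ^ 2 = 1 := by
    have h2 : s ^ k * z = s ^ (-k) * z⁻¹ := by linear_combination h
    calc (s ^ k * z) ^ 2 = (s ^ k * z) * (s ^ (-k) * z⁻¹) := by rw [← h2]; ring
    _ = (s ^ k * s ^ (-k)) * (z * z⁻¹) := by ring
    _ = 1 := by rw [← zpow_add₀ hs, add_neg_cancel, zpow_zero, mul_inv_cancel₀ hz, one_mul]
  rw [show s ^ k * z = ((Real.sqrt q ^ k * t : ℝ) : ℂ) * Complex.I from awpt q hq0 hq1 t ht k] at hsq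
  have : ((Real.sqrt q ^ k * t : ℝ) : ℂ) ^ 2 * Complex.I ^ 2 = 1 := by
    rw [← mul_pow]; exact hsq
  rw [Complex.I_sq] at this
  have hre : -((Real.sqrt q ^ k * t) ^ 2) = 1 := by
    have h9 : ((-(Real.sqrt q ^ k * t) ^ 2 : ℝ) : ℂ) = ((1:ℝ) : ℂ) := by
      push_cast at this ⊢
      linear_combination this
    exact_mod_cast h9
  have := awrpos q hq0 t ht k
  nlinarith

end AWProof7
noncomputable section AWProof8

open Polynomial

lemma awinj : Set.InjOn (fun t : ℝ => awXmap ((t:ℂ) * Complex.I)) (Set.Ioi 1) := by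
  intro t1 h1 t2 h2 h
  simp only [Set.mem_Ioi] at h1 h2
  have h0a : t1 ≠ 0 := by linarith
  have h0b : t2 ≠ 0 := by linarith
  have hval : ∀ t : ℝ, t ≠ 0 →
      awXmap ((t:ℂ) * Complex.I) = (((t - t⁻¹)/2 : ℝ) : ℂ) * Complex.I := by
    intro t ht
    have htc : (t:ℂ) ≠ 0 := by exact_mod_cast ht
    rw [awXmap, mul_inv, Complex.inv_I]
    push_cast
    field_simp
    ring
  simp only [hval t1 h0a, hval t2 h0b] at h
  have h' := mul_right_cancel₀ Complex.I_ne_zero h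
  have heq : (t1 - t1⁻¹)/2 = (t2 - t2⁻¹)/2 := by exact_mod_cast h'
  have e1 := mul_inv_cancel₀ h0a
  have e2 := mul_inv_cancel₀ h0b
  have key : (t1 - t2) * (t1*t2 + 1) = 0 := by
    linear_combination (2*t1*t2) * heq + t2 * e1 - t1 * e2
  rcases mul_eq_zero.mp key with hk | hk
  · linarith [sub_eq_zero.mp hk]
  · nlinarith

lemma awPmain (q : ℝ) (hq0 : 0 < q) (hq1 : q < 1)
    (D S : ℂ[X] → ℂ[X]) (hD : IsAWDiff q D) (hS : IsAWAvg q S)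
    (n : ℕ) (f : ℂ[X]) :
    C (awAlpha q) * S (D^[n] f)
      = C (awAlphaN q (n+1)) * D^[n] (S f) - C (awGammaN q n) * D^[n+1] (awU1 q * f) := by
  apply Polynomial.eq_of_infinite_eval_eq
  apply ((Set.Ioi_infinite (1:ℝ)).image awinj).mono
  rintro x ⟨t, ht, rfl⟩
  simp only [Set.mem_Ioi] at ht
  simp only [Set.mem_setOf_eq, eval_mul, eval_sub, eval_C]
  have h0 : ∀ k : ℤ, awSqrt q ^ k * ((t:ℂ) * Complex.I) ≠ 0 := fun k => awpt0 q hq0 hq1 t ht k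
  have h1 : ∀ k : ℤ, awSqrt q ^ k * ((t:ℂ) * Complex.I) ≠ 1 := fun k => awpt1 q hq0 hq1 t ht k
  have hm1 : ∀ k : ℤ, awSqrt q ^ k * ((t:ℂ) * Complex.I) ≠ -1 := fun k => awptm1 q hq0 hq1 t ht k
  have hδ : ∀ k : ℤ, awXp (awSqrt q) ((t:ℂ) * Complex.I) (k+1)
      - awXp (awSqrt q) ((t:ℂ) * Complex.I) (k-1) ≠ 0 := fun k => awptδ q hq0 hq1 t ht k
  have hx0 : awXmap ((t:ℂ) * Complex.I) = awXp (awSqrt q) ((t:ℂ) * Complex.I) 0 := by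
    rw [awXp, zpow_zero, one_mul]
  rw [hx0]
  rw [awbridgeS q hq0 _ h0 h1 hm1 S hS (D^[n] f) 0]
  have hseq : (fun m => (D^[n] f).eval (awXp (awSqrt q) ((t:ℂ) * Complex.I) m))
      = (awdd (awSqrt q) ((t:ℂ) * Complex.I))^[n]
          (fun m => f.eval (awXp (awSqrt q) ((t:ℂ) * Complex.I) m)) :=
    funext fun m => awbridgeDn q hq0 _ h0 h1 hm1 D hD n f m
  rw [hseq]
  rw [awbridgeDn q hq0 _ h0 h1 hm1 D hD n (S f) 0]
  have hSfun : (fun m => (S f).eval (awXp (awSqrt q) ((t:ℂ) * Complex.I) m))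
      = awss (fun m => f.eval (awXp (awSqrt q) ((t:ℂ) * Complex.I) m)) :=
    funext fun m => awbridgeS q hq0 _ h0 h1 hm1 S hS f m
  rw [hSfun]
  rw [awbridgeDn q hq0 _ h0 h1 hm1 D hD (n+1) (awU1 q * f) 0]
  have hUfun : (fun m => (awU1 q * f).eval (awXp (awSqrt q) ((t:ℂ) * Complex.I) m))
      = fun m => ((awAlpha q)^2 - 1) * awXp (awSqrt q) ((t:ℂ) * Complex.I) m
          * f.eval (awXp (awSqrt q) ((t:ℂ) * Complex.I) m) := by
    funext m
    simp only [eval_mul, awU1, eval_C, eval_X]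
  rw [hUfun]
  exact awClaim q hq0 hq1 ((t:ℂ) * Complex.I) hδ n
    (fun m => f.eval (awXp (awSqrt q) ((t:ℂ) * Complex.I) m)) 0

lemma awDualIter (D : ℂ[X] → ℂ[X]) :
    ∀ (n : ℕ) (v : ℂ[X] → ℂ) (f : ℂ[X]),
      (awDdual D)^[n] v f = (-1:ℂ)^n * v (D^[n] f) := by
  intro n
  induction n with
  | zero => intro v f; simp
  | succ n ih =>
    intro v f
    rw [Function.iterate_succ_apply, ih (awDdual D v) f]
    simp only [awDdual]
    rw [← Function.iterate_succ_apply' D n f]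
    ring

end AWProof8

/-- `α·𝐃_q^n 𝐒_q u = α_{n+1}·𝐒_q 𝐃_q^n u + γ_n·U₁·𝐃_q^{n+1} u`
as linear functionals on `ℂ[X]`. -/
theorem stmt_4 (q : ℝ) (hq0 : 0 < q) (hq1 : q < 1)
    (D S : ℂ[X] → ℂ[X]) (hD : IsAWDiff q D) (hS : IsAWAvg q S)
    (n : ℕ) (u : ℂ[X] →ₗ[ℂ] ℂ) :
    ∀ f : ℂ[X],
      awAlpha q * (awDdual D)^[n] (awSdual S ⇑u) f =
        awAlphaN q (n + 1) * awSdual S ((awDdual D)^[n] ⇑u) f +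
          awGammaN q n * (awDdual D)^[n + 1] ⇑u (awU1 q * f) := by
  intro f
  have hsm : ∀ (c : ℂ) (p : ℂ[X]), u (Polynomial.C c * p) = c * u p := by
    intro c p
    rw [← Polynomial.smul_eq_C_mul, map_smul, smul_eq_mul]
  have hP := congrArg u (awPmain q hq0 hq1 D S hD hS n f)
  rw [map_sub, hsm, hsm, hsm] at hP
  rw [awDualIter D n (awSdual S ⇑u) f, awDualIter D (n+1) ⇑u (awU1 q * f)]
  simp only [awSdual]
  rw [awDualIter D n ⇑u (S f)]
  linear_combination ((-1:ℂ))^n * hP
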